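/- Let R be a finite ring with unity, let χ be an additive character of R, let x ∈ R, and let K be the largest left ideal of R contained in (x)_ℓ ∩ {y ∈ R : χ(y) = 1}. If M_R((x)_ℓ) is a minimal subset of itself (i.e., no proper subset E ⊊ M_R((x)_ℓ) satisfies ⋂_{M∈E} M = ⋂_{M∈M_R((x)_ℓ)} M), then φ_R(K,(x)_ℓ) · C_χ(x) = μ_R(K,(x)_ℓ) · |[x]_ℓ|; equivalently, C_χ(x) = μ_R(K,(x)_ℓ) · |[x]_ℓ| / φ_R(K,(x)_ℓ). -/

import Mathlib

open scoped BigOperators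
open Classical

variable {R : Type*}

/-- The left ideal of `R` generated by `x`, i.e. `(x)_ℓ`. -/
def lgen [Ring R] (x : R) : Submodule R R := Submodule.span R {x}

/-- `[x]_ℓ = {y : (y)_ℓ = (x)_ℓ}`. -/
def classL [Ring R] (x : R) : Set R := {y | lgen y = lgen x}

/-- The character sum `C_χ(x) = ∑_{s ∈ [x]_ℓ} χ(s)`. -/
noncomputable def CchiL [Ring R] (χ : AddChar R ℂ) (x : R) : ℂ :=
  ∑ᶠ s ∈ classL x, χ s

/-- The set `M_R(J)` of maximal `R`-left ideals of `J`. -/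
def maxROf [Ring R] (J : Submodule R R) : Set (Submodule R R) :=
  {M | M < J ∧ ∀ I' : Submodule R R, M < I' → ¬ I' < J}

/-- The set `M_R(J, K)` of maximal `R`-left ideals of `J` containing `K`. -/
def maxROfAbove [Ring R] (J K : Submodule R R) : Set (Submodule R R) :=
  {M | M ∈ maxROf J ∧ K ≤ M}

/-- Intersection of the family `E` of left ideals, with the convention that the
empty intersection is `J`. -/
noncomputable def interIn [Ring R] (J : Submodule R R) (E : Set (Submodule R R)) :
    Submodule R R :=
  if E = ∅ then J else sInf E

/-- The Möbius function `μ_R(I, J)` on left ideals of `R`. -/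
noncomputable def muR [Ring R] (I J : Submodule R R) : ℤ :=
  if I = J then 1
  else if I < J ∧ ∃ E : Set (Submodule R R),
      E ⊆ maxROf J ∧ E.Nonempty ∧ interIn J E = I then
    (Nat.card {E : Set (Submodule R R) //
        E ⊆ maxROf J ∧ interIn J E = I ∧ Even (Nat.card E)} : ℤ)
      - (Nat.card {E : Set (Submodule R R) //
        E ⊆ maxROf J ∧ interIn J E = I ∧ Odd (Nat.card E)} : ℤ)
  else 0

/-- The function `φ_R(I, J)` on left ideals of `R`. -/
noncomputable def phiR [Ring R] (I J : Submodule R R) : ℂ :=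
  if I = J then 1
  else if I < J ∧ ∃ E : Set (Submodule R R),
      E ⊆ maxROf J ∧ E.Nonempty ∧ interIn J E = I then
    ∏ᶠ M ∈ maxROfAbove J I, ((Nat.card J : ℂ) / (Nat.card M : ℂ) - 1)
  else 1

/-!
Since `[x]_ℓ = (x)_ℓ \ ⋃ M_R((x)_ℓ)`, inclusion–exclusion writes `C_χ(x)` as an alternating sum,
over `E ⊆ M_R((x)_ℓ)`, of character sums over `⋂ E`; by orthogonality each of these is `|⋂ E|`
if `⋂ E ⊆ K` and `0` otherwise. Minimality makes `E ↦ ⋂ E` injective and order-reversing, with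
`⋂ E + M = (x)_ℓ` for `M ∉ E`, so `|⋂ E| = |J| ∏_{M ∈ E} |M| / |J|` where `J = (x)_ℓ`. If
`⋂ M_R(J) ⊆ K` then `K = ⋂ M_R(J, K)`, the sum runs over the supersets of `M_R(J, K)` and factors
into a product; the trivial character gives the same product formula for `|[x]_ℓ|`, and comparing
the two yields the identity. If `⋂ M_R(J) ⊄ K`, both `C_χ(x)` and `μ_R(K, J)` vanish.
-/

open Finset

theorem Submodule.card_inf_mul_card_sup {A : Type*} [Ring R] [AddCommGroup A] [Module R A]
    (P Q : Submodule R A) : Nat.card ↥(P ⊓ Q) * Nat.card ↥(P ⊔ Q) = Nat.card P * Nat.card Q := by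
  rw [(Submodule.comap P.subtype (P ⊓ Q)).card_eq_card_quotient_mul_card,
    (Submodule.comap (P ⊔ Q).subtype Q).card_eq_card_quotient_mul_card,
    Nat.card_congr (Submodule.comapSubtypeEquivOfLe (inf_le_left : P ⊓ Q ≤ P)).toEquiv,
    Nat.card_congr (Submodule.comapSubtypeEquivOfLe (le_sup_right : Q ≤ P ⊔ Q)).toEquiv,
    ← Nat.card_congr (LinearMap.quotientInfEquivSupQuotient P Q).toEquiv, Submodule.comap_inf]
  ring

theorem sum_addChar_mem {A S : Type*} [AddGroup A] [Fintype A] [SetLike S A]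
    [AddSubgroupClass S A] (χ : AddChar A ℂ) (L : S) :
    ∑ a ∈ (L : Set A).toFinset, χ a = if ∀ a ∈ L, χ a = 1 then (Nat.card L : ℂ) else 0 := by
  have hψ := (χ.compAddMonoidHom (AddSubgroupClass.subtype L)).sum_eq_ite
  simp only [AddChar.compAddMonoidHom_apply, AddSubgroupClass.coe_subtype] at hψ
  rw [sum_subtype (p := (· ∈ L)) _ (fun _ => Set.mem_toFinset) χ, hψ, Nat.card_eq_fintype_card]
  refine if_congr ⟨fun h a ha => ?_, fun h => by ext a; simpa using h a a.2⟩ rfl rfl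
  simpa using DFunLike.congr_fun h ⟨a, ha⟩

theorem sum_powerset_ite_filter_subset {ι A : Type*} [DecidableEq ι] [CommSemiring A]
    (s : Finset ι) (p : ι → Prop) [DecidablePred p] (g : ι → A) :
    ∑ t ∈ s.powerset, (if s.filter p ⊆ t then ∏ i ∈ t, g i else 0) =
      (∏ i ∈ s.filter p, g i) * ∏ i ∈ s.filter (¬ p ·), (g i + 1) := by
  have h := prod_add g (fun i => if p i then 0 else 1) s
  rw [prod_congr rfl fun i _ => (apply_ite (g i + ·) (p i) 0 1).trans (by rw [add_zero]),
    prod_ite] at h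
  rw [h]
  refine sum_congr rfl fun t ht => ?_
  have hsub : (∀ i ∈ s \ t, ¬ p i) ↔ s.filter p ⊆ t := by
    simp only [mem_sdiff, subset_iff, mem_filter]
    exact ⟨fun h i hi => by_contra fun hit => h i ⟨hi.1, hit⟩ hi.2,
      fun h i hi hpi => hi.2 (h ⟨hi.1, hpi⟩)⟩
  simp_rw [← ite_not (p _), prod_boole, mul_ite, mul_one, mul_zero, hsub]

theorem natCard_subtype_eq_ite {α : Type*} {p : α → Prop} (a₀ : α) (q : Prop) [Decidable q]
    (h : ∀ a, p a ↔ a = a₀ ∧ q) : Nat.card {a // p a} = if q then 1 else 0 := by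
  split_ifs with hq
  · rw [Nat.card_eq_one_iff_exists]
    exact ⟨⟨a₀, (h a₀).mpr ⟨rfl, hq⟩⟩, fun a => Subtype.ext ((h a).mp a.2).1⟩
  · have : IsEmpty {a // p a} := ⟨fun a => hq ((h a).mp a.2).2⟩
    exact Nat.card_of_isEmpty

def MaxROfMinimal [Ring R] (J : Submodule R R) : Prop :=
  ∀ E : Set (Submodule R R), E ⊂ maxROf J → interIn J E ≠ interIn J (maxROf J)

section Lattice

variable [Ring R] {J K M : Submodule R R} {E E' : Set (Submodule R R)}

theorem mem_maxROf_iff : M ∈ maxROf J ↔ M ⋖ J := Iff.rfl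

theorem interIn_eq_inf_sInf (hE : E ⊆ maxROf J) : interIn J E = J ⊓ sInf E := by
  unfold interIn
  split_ifs with h
  · simp [h]
  · obtain ⟨M, hM⟩ := Set.nonempty_iff_ne_empty.mpr h
    exact (inf_eq_right.mpr ((sInf_le hM).trans (hE hM).1.le)).symm

theorem interIn_le (hE : E ⊆ maxROf J) : interIn J E ≤ J := by
  rw [interIn_eq_inf_sInf hE]
  exact inf_le_left

theorem interIn_le_of_mem (hE : E ⊆ maxROf J) (hM : M ∈ E) : interIn J E ≤ M := by
  rw [interIn_eq_inf_sInf hE]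
  exact inf_le_of_right_le (sInf_le hM)

theorem le_interIn (hKJ : K ≤ J) (hK : ∀ M ∈ E, K ≤ M) (hE : E ⊆ maxROf J) :
    K ≤ interIn J E := by
  rw [interIn_eq_inf_sInf hE]
  exact le_inf hKJ (le_sInf hK)

theorem interIn_anti (hE : E ⊆ maxROf J) (h : E' ⊆ E) : interIn J E ≤ interIn J E' := by
  rw [interIn_eq_inf_sInf hE, interIn_eq_inf_sInf (h.trans hE)]
  exact inf_le_inf_left J (sInf_le_sInf h)

theorem interIn_union (hE : E ⊆ maxROf J) (hE' : E' ⊆ maxROf J) :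
    interIn J (E ∪ E') = interIn J E ⊓ interIn J E' := by
  rw [interIn_eq_inf_sInf (Set.union_subset hE hE'), interIn_eq_inf_sInf hE,
    interIn_eq_inf_sInf hE', sInf_union, inf_inf_distrib_left]

theorem interIn_insert (hM : M ∈ maxROf J) (hE : E ⊆ maxROf J) :
    interIn J (insert M E) = interIn J E ⊓ M := by
  rw [interIn_eq_inf_sInf (Set.insert_subset hM hE), interIn_eq_inf_sInf hE, sInf_insert,
    inf_left_comm, inf_comm M]

theorem mem_interIn (hE : E ⊆ maxROf J) {a : R} : a ∈ interIn J E ↔ a ∈ J ∧ ∀ M ∈ E, a ∈ M := by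
  rw [interIn_eq_inf_sInf hE, Submodule.mem_inf, Submodule.mem_sInf]

theorem MaxROfMinimal.mem_of_interIn_le (hmin : MaxROfMinimal J) (hE : E ⊆ maxROf J)
    (hM : M ∈ maxROf J) (h : interIn J E ≤ M) : M ∈ E := by
  by_contra hME
  have hE' : E ⊆ maxROf J \ {M} := fun N hN => ⟨hE hN, fun hNM => hME (hNM ▸ hN)⟩
  refine hmin _ (Set.sdiff_singleton_ssubset.mpr hM)
    (le_antisymm ?_ (interIn_anti le_rfl Set.sdiff_subset))
  conv_rhs => rw [← Set.insert_eq_of_mem hM, ← Set.insert_sdiff_singleton]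
  rw [interIn_insert hM Set.sdiff_subset]
  exact le_inf le_rfl ((interIn_anti Set.sdiff_subset hE').trans h)

theorem MaxROfMinimal.interIn_le_interIn_iff (hmin : MaxROfMinimal J) (hE : E ⊆ maxROf J)
    (hE' : E' ⊆ maxROf J) : interIn J E ≤ interIn J E' ↔ E' ⊆ E :=
  ⟨fun h _ hM => hmin.mem_of_interIn_le hE (hE' hM) (h.trans (interIn_le_of_mem hE' hM)),
    interIn_anti hE⟩

theorem MaxROfMinimal.interIn_sup_eq (hmin : MaxROfMinimal J) (hE : E ⊆ maxROf J)
    (hM : M ∈ maxROf J) (hME : M ∉ E) : interIn J E ⊔ M = J := by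
  refine ((mem_maxROf_iff.mp hM).eq_or_eq le_sup_right (sup_le (interIn_le hE) hM.1.le)).resolve_left
    fun h => hME (hmin.mem_of_interIn_le hE hM (h ▸ le_sup_left))

/-- The maximal left ideals of `J` not containing `K` have an intersection `D` with
`K ⊔ D = J`, since a maximal left ideal above `K ⊔ D` would contain `K` and (by minimality) be one
of them; the modular law then gives `⋂ M_R(J, K) = K ⊔ ⋂ M_R(J) = K`. -/
theorem MaxROfMinimal.interIn_maxROfAbove [Finite R] (hmin : MaxROfMinimal J)
    (hIK : interIn J (maxROf J) ≤ K) (hKJ : K ≤ J) : interIn J (maxROfAbove J K) = K := by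
  set D := {M | M ∈ maxROf J ∧ ¬ K ≤ M}
  have hA : maxROfAbove J K ⊆ maxROf J := fun _ hM => hM.1
  have hD : D ⊆ maxROf J := fun _ hM => hM.1
  have hKD : K ⊔ interIn J D = J := by
    by_contra hne
    obtain ⟨M, hle, hM⟩ := exists_le_covBy_of_lt ((sup_le hKJ (interIn_le hD)).lt_of_ne hne)
    exact (hmin.mem_of_interIn_le hD hM (le_sup_right.trans hle)).2 (le_sup_left.trans hle)
  have hAD : maxROfAbove J K ∪ D = maxROf J := by
    ext M
    simp only [maxROfAbove, D, Set.mem_union, Set.mem_ofPred_eq]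
    tauto
  have hKA : K ≤ interIn J (maxROfAbove J K) := le_interIn hKJ (fun _ hM => hM.2) hA
  refine le_antisymm ?_ hKA
  calc interIn J (maxROfAbove J K)
      = (K ⊔ interIn J D) ⊓ interIn J (maxROfAbove J K) := by
        rw [hKD, inf_eq_right.mpr (interIn_le hA)]
    _ = K ⊔ interIn J (maxROf J) := by
        rw [sup_inf_assoc_of_le _ hKA, inf_comm, ← interIn_union hA hD, hAD]
    _ ≤ K := sup_le le_rfl hIK

end Lattice

section Finite

variable [Ring R] [Finite R] {J K M : Submodule R R}

theorem natCard_submodule_ne_zero (L : Submodule R R) : (Nat.card L : ℂ) ≠ 0 :=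
  Nat.cast_ne_zero.mpr Nat.card_pos.ne'

theorem natCard_lt_of_mem_maxROf (hM : M ∈ maxROf J) : Nat.card M < Nat.card J := by
  rw [← SetLike.coe_sort_coe, ← SetLike.coe_sort_coe, Nat.card_coe_set_eq, Nat.card_coe_set_eq]
  exact Set.ncard_lt_ncard (SetLike.coe_ssubset_coe.mpr hM.1) (Set.toFinite _)

noncomputable def maxFinset (J : Submodule R R) : Finset (Submodule R R) :=
  (Set.toFinite (maxROf J)).toFinset

@[simp]
theorem mem_maxFinset : M ∈ maxFinset J ↔ M ∈ maxROf J := Set.Finite.mem_toFinset _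

theorem coe_filter_maxFinset (K : Submodule R R) :
    (((maxFinset J).filter (K ≤ ·) : Finset _) : Set (Submodule R R)) = maxROfAbove J K := by
  ext M
  simp [maxROfAbove]

theorem filter_maxFinset_self : (maxFinset J).filter (J ≤ ·) = ∅ :=
  filter_false_of_mem fun _ hM => (mem_maxFinset.mp hM).1.not_ge

theorem MaxROfMinimal.card_interIn (hmin : MaxROfMinimal J) (E : Finset (Submodule R R))
    (hE : (E : Set (Submodule R R)) ⊆ maxROf J) :
    (Nat.card (interIn J E) : ℂ) = Nat.card J * ∏ M ∈ E, (Nat.card M / Nat.card J : ℂ) := by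
  induction E using Finset.induction_on with
  | empty => simp [interIn]
  | @insert M E hME ih =>
    rw [coe_insert, Set.insert_subset_iff] at hE
    have hsup : interIn J E ⊔ M = J := hmin.interIn_sup_eq hE.2 hE.1 (by exact_mod_cast hME)
    have hcard := congrArg (fun n : ℕ => (n : ℂ)) (Submodule.card_inf_mul_card_sup (interIn J E) M)
    simp only [hsup, Nat.cast_mul] at hcard
    rw [coe_insert, interIn_insert hE.1 hE.2, prod_insert hME,
      eq_div_of_mul_eq (natCard_submodule_ne_zero J) hcard, ih hE.2]
    field_simp

end Finite

section CharacterSum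

variable [Ring R] [Fintype R] {x : R} {χ : AddChar R ℂ} {K : Submodule R R}

theorem mem_classL_iff {y : R} :
    y ∈ classL x ↔ y ∈ lgen x ∧ ∀ M ∈ maxROf (lgen x), y ∉ M := by
  have hy : y ∈ lgen y := Submodule.mem_span_singleton_self y
  have hle : lgen y ≤ lgen x ↔ y ∈ lgen x := Submodule.span_singleton_le_iff_mem y _
  refine ⟨fun h => ⟨h ▸ hy, fun M hM hyM => ?_⟩, fun ⟨hyx, hM⟩ => ?_⟩
  · exact hM.1.not_ge (h ▸ (Submodule.span_singleton_le_iff_mem y M).mpr hyM)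
  · by_contra hne
    obtain ⟨M, hle', hM'⟩ := exists_le_covBy_of_lt ((hle.mpr hyx).lt_of_ne hne)
    exact hM M hM' (hle' hy)

theorem CchiL_eq_sum_powerset (χ : AddChar R ℂ) (x : R) :
    CchiL χ x = ∑ E ∈ (maxFinset (lgen x)).powerset,
      (-1) ^ #E * ∑ a ∈ (interIn (lgen x) E : Set R).toFinset, χ a := by
  have hIE := inclusion_exclusion_sum_inf_compl (maxFinset (lgen x))
    (fun M => (M : Set R).toFinset) (fun a => if a ∈ lgen x then χ a else 0)
  rw [← sum_filter] at hIE
  rw [CchiL, finsum_mem_eq_toFinset_sum]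
  convert hIE using 2
  · ext a
    simp [mem_classL_iff, Finset.mem_inf, and_comm]
  · rename_i E hE
    have hE' : (E : Set (Submodule R R)) ⊆ maxROf (lgen x) := fun M hM =>
      mem_maxFinset.mp (mem_powerset.mp hE hM)
    rw [← sum_filter, zsmul_eq_mul]
    push_cast
    congr 2
    ext a
    simp [mem_interIn hE', Finset.mem_inf, and_comm]

theorem CchiL_eq_sum_of_ker (hker : ∀ L ≤ lgen x, (∀ a ∈ L, χ a = 1) ↔ L ≤ K) :
    CchiL χ x = ∑ E ∈ (maxFinset (lgen x)).powerset,
      if interIn (lgen x) E ≤ K then (-1) ^ #E * (Nat.card (interIn (lgen x) E) : ℂ) else 0 := by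
  rw [CchiL_eq_sum_powerset]
  refine sum_congr rfl fun E hE => ?_
  have hE' : (E : Set (Submodule R R)) ⊆ maxROf (lgen x) := fun M hM =>
    mem_maxFinset.mp (mem_powerset.mp hE hM)
  rw [sum_addChar_mem, if_congr (hker _ (interIn_le hE')) rfl rfl, mul_ite, mul_zero]

theorem CchiL_eq_zero (hker : ∀ L ≤ lgen x, (∀ a ∈ L, χ a = 1) ↔ L ≤ K)
    (hIK : ¬ interIn (lgen x) (maxROf (lgen x)) ≤ K) : CchiL χ x = 0 := by
  rw [CchiL_eq_sum_of_ker hker]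
  refine sum_eq_zero fun E hE => if_neg fun hEK => hIK ((interIn_anti le_rfl ?_).trans hEK)
  exact fun M hM => mem_maxFinset.mp (mem_powerset.mp hE hM)

end CharacterSum

section Formula

variable [Ring R] [Fintype R] {x : R} {χ : AddChar R ℂ} {K : Submodule R R}

theorem MaxROfMinimal.CchiL_eq_prod (hmin : MaxROfMinimal (lgen x))
    (hker : ∀ L ≤ lgen x, (∀ a ∈ L, χ a = 1) ↔ L ≤ K) (hKJ : K ≤ lgen x)
    (hIK : interIn (lgen x) (maxROf (lgen x)) ≤ K) :
    CchiL χ x = Nat.card (lgen x) *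
      ((∏ M ∈ (maxFinset (lgen x)).filter (K ≤ ·), -(Nat.card M / Nat.card (lgen x) : ℂ)) *
        ∏ M ∈ (maxFinset (lgen x)).filter (¬ K ≤ ·), (1 - Nat.card M / Nat.card (lgen x) : ℂ)) := by
  have hKT := hmin.interIn_maxROfAbove hIK hKJ
  have hterm : ∀ E ∈ (maxFinset (lgen x)).powerset,
      (if interIn (lgen x) E ≤ K then (-1) ^ #E * (Nat.card (interIn (lgen x) E) : ℂ) else 0) =
        Nat.card (lgen x) * if (maxFinset (lgen x)).filter (K ≤ ·) ⊆ E then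
          ∏ M ∈ E, -(Nat.card M / Nat.card (lgen x) : ℂ) else 0 := by
    intro E hE
    have hE' : (E : Set (Submodule R R)) ⊆ maxROf (lgen x) := fun M hM =>
      mem_maxFinset.mp (mem_powerset.mp hE hM)
    have hiff : interIn (lgen x) E ≤ K ↔ (maxFinset (lgen x)).filter (K ≤ ·) ⊆ E := by
      rw [← coe_subset, coe_filter_maxFinset, ← hmin.interIn_le_interIn_iff hE' fun _ hM => hM.1,
        hKT]
    rw [if_congr hiff rfl rfl, hmin.card_interIn E hE', prod_neg, mul_ite, mul_zero]
    congr 1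
    ring
  rw [CchiL_eq_sum_of_ker hker, sum_congr rfl hterm, ← mul_sum, sum_powerset_ite_filter_subset]
  simp_rw [neg_add_eq_sub]

theorem CchiL_zero (x : R) : CchiL 0 x = Nat.card (classL x) := by
  simp [CchiL, finsum_mem_eq_toFinset_sum]

theorem MaxROfMinimal.natCard_classL (hmin : MaxROfMinimal (lgen x)) :
    (Nat.card (classL x) : ℂ) =
      Nat.card (lgen x) * ∏ M ∈ maxFinset (lgen x), (1 - Nat.card M / Nat.card (lgen x) : ℂ) := by
  rw [← CchiL_zero, hmin.CchiL_eq_prod (K := lgen x) (by simp) le_rfl (interIn_le le_rfl),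
    filter_maxFinset_self, filter_true_of_mem fun M hM => (mem_maxFinset.mp hM).1.not_ge,
    prod_empty, one_mul]

end Formula

section MobiusPhi

variable [Ring R] {J K : Submodule R R}

theorem lt_and_exists_interIn_eq (hKJ : K < J) (hKT : interIn J (maxROfAbove J K) = K) :
    K < J ∧ ∃ E : Set (Submodule R R), E ⊆ maxROf J ∧ E.Nonempty ∧ interIn J E = K := by
  refine ⟨hKJ, maxROfAbove J K, fun _ hM => hM.1, ?_, hKT⟩
  refine Set.nonempty_iff_ne_empty.mpr fun h => hKJ.ne' ?_
  rw [← hKT, h, interIn, if_pos rfl]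

theorem muR_eq_zero (hIK : ¬ interIn J (maxROf J) ≤ K) : muR K J = 0 := by
  have hK : ∀ E ⊆ maxROf J, interIn J E ≠ K := fun E hE hEK =>
    hIK (hEK ▸ interIn_anti le_rfl hE)
  rw [muR, if_neg (hK ∅ (Set.empty_subset _) ∘ (by rw [interIn, if_pos rfl]; exact ·.symm)),
    if_neg fun ⟨_, E, hE, _, hEK⟩ => hK E hE hEK]

variable [Finite R]

theorem MaxROfMinimal.muR_eq (hmin : MaxROfMinimal J) (hKJ : K ≤ J)
    (hKT : interIn J (maxROfAbove J K) = K) :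
    (muR K J : ℂ) = (-1) ^ #((maxFinset J).filter (K ≤ ·)) := by
  rcases hKJ.eq_or_lt with rfl | hlt
  · simp [muR, filter_maxFinset_self]
  have hsol : ∀ E, (E ⊆ maxROf J ∧ interIn J E = K) ↔ E = maxROfAbove J K := fun E =>
    ⟨fun ⟨hE, hEK⟩ => Set.Subset.antisymm
      ((hmin.interIn_le_interIn_iff (fun _ hM => hM.1) hE).mp (hKT.trans hEK.symm).le)
      ((hmin.interIn_le_interIn_iff hE fun _ hM => hM.1).mp (hEK.trans hKT.symm).le),
    fun h => h ▸ ⟨fun _ hM => hM.1, hKT⟩⟩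
  have hcardT : Nat.card (maxROfAbove J K) = #((maxFinset J).filter (K ≤ ·)) := by
    rw [← coe_filter_maxFinset, Nat.card_coe_set_eq, Set.ncard_coe_finset]
  have hcount (q : ℕ → Prop) [DecidablePred q] :
      Nat.card {E : Set (Submodule R R) // E ⊆ maxROf J ∧ interIn J E = K ∧ q (Nat.card E)} =
        if q #((maxFinset J).filter (K ≤ ·)) then 1 else 0 := by
    rw [← hcardT]
    exact natCard_subtype_eq_ite _ _ fun E => by
      rw [← and_assoc, hsol]
      exact and_congr_right fun h => by rw [h]
  rw [muR, if_neg hlt.ne, if_pos (lt_and_exists_interIn_eq hlt hKT), hcount, hcount]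
  rcases Nat.even_or_odd #((maxFinset J).filter (K ≤ ·)) with h | h
  · simp [h, h.neg_one_pow, Nat.not_odd_iff_even.mpr h]
  · simp [h, h.neg_one_pow, Nat.not_even_iff_odd.mpr h]

theorem phiR_eq_prod (hKJ : K ≤ J) (hKT : interIn J (maxROfAbove J K) = K) :
    phiR K J = ∏ M ∈ (maxFinset J).filter (K ≤ ·), ((Nat.card J : ℂ) / Nat.card M - 1) := by
  rcases hKJ.eq_or_lt with rfl | hlt
  · rw [phiR, if_pos rfl, filter_maxFinset_self, prod_empty]
  rw [phiR, if_neg hlt.ne, if_pos (lt_and_exists_interIn_eq hlt hKT),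
    ← coe_filter_maxFinset, finprod_mem_coe_finset]

theorem prod_natCard_div_sub_one_ne_zero (s : Finset (Submodule R R)) (hs : ↑s ⊆ maxROf J) :
    ∏ M ∈ s, ((Nat.card J : ℂ) / Nat.card M - 1) ≠ 0 := by
  refine prod_ne_zero_iff.mpr fun M hM h => (natCard_lt_of_mem_maxROf (hs hM)).ne' ?_
  exact_mod_cast (div_eq_one_iff_eq (natCard_submodule_ne_zero M)).mp (sub_eq_zero.mp h)

end MobiusPhi

theorem MaxROfMinimal.phiR_mul_CchiL [Ring R] [Fintype R] {x : R} {χ : AddChar R ℂ}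
    {K : Submodule R R} (hmin : MaxROfMinimal (lgen x))
    (hker : ∀ L ≤ lgen x, (∀ a ∈ L, χ a = 1) ↔ L ≤ K) (hKJ : K ≤ lgen x)
    (hIK : interIn (lgen x) (maxROf (lgen x)) ≤ K) :
    phiR K (lgen x) * CchiL χ x = muR K (lgen x) * Nat.card (classL x) := by
  have hKT := hmin.interIn_maxROfAbove hIK hKJ
  set r : Submodule R R → ℂ := fun M => Nat.card M / Nat.card (lgen x)
  set TK := (maxFinset (lgen x)).filter (K ≤ ·)
  have hfac : (∏ M ∈ TK, ((Nat.card (lgen x) : ℂ) / Nat.card M - 1)) * ∏ M ∈ TK, -r M =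
      (-1) ^ #TK * ∏ M ∈ TK, (1 - r M) := by
    rw [← prod_mul_distrib, ← prod_neg]
    refine prod_congr rfl fun M _ => ?_
    have := natCard_submodule_ne_zero M
    have := natCard_submodule_ne_zero (lgen x)
    simp only [r]
    field_simp
  rw [phiR_eq_prod hKJ hKT, hmin.muR_eq hKJ hKT, hmin.CchiL_eq_prod hker hKJ hIK,
    hmin.natCard_classL, ← prod_filter_mul_prod_filter_not (maxFinset (lgen x)) (K ≤ ·)]
  linear_combination
    (Nat.card (lgen x) * ∏ M ∈ (maxFinset (lgen x)).filter (¬ K ≤ ·), (1 - r M)) * hfac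

theorem stmt1 [Ring R] [Fintype R] (χ : AddChar R ℂ) (x : R) (K : Submodule R R)
    (hK : (K : Set R) ⊆ (lgen x : Set R) ∩ {y | χ y = 1})
    (hKmax : ∀ L : Submodule R R,
      (L : Set R) ⊆ (lgen x : Set R) ∩ {y | χ y = 1} → L ≤ K)
    (hmin : ∀ E : Set (Submodule R R), E ⊂ maxROf (lgen x) →
      interIn (lgen x) E ≠ interIn (lgen x) (maxROf (lgen x))) :
    phiR K (lgen x) * CchiL χ x = (muR K (lgen x) : ℂ) * (Nat.card (classL x) : ℂ) ∧
    CchiL χ x = (muR K (lgen x) : ℂ) * (Nat.card (classL x) : ℂ) / phiR K (lgen x) := by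
  have hKJ : K ≤ lgen x := fun y hy => (hK hy).1
  have hker : ∀ L ≤ lgen x, (∀ a ∈ L, χ a = 1) ↔ L ≤ K := fun L hL =>
    ⟨fun h => hKmax L fun y hy => ⟨hL hy, h y hy⟩, fun h a ha => (hK (h ha)).2⟩
  by_cases hIK : interIn (lgen x) (maxROf (lgen x)) ≤ K
  · have key := MaxROfMinimal.phiR_mul_CchiL hmin hker hKJ hIK
    have hφ : phiR K (lgen x) ≠ 0 := by
      rw [phiR_eq_prod hKJ (MaxROfMinimal.interIn_maxROfAbove hmin hIK hKJ)]
      exact prod_natCard_div_sub_one_ne_zero _ (by rw [coe_filter_maxFinset]; exact fun _ h => h.1)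
    exact ⟨key, (eq_div_iff hφ).mpr (by rw [mul_comm, key])⟩
  · simp [CchiL_eq_zero hker hIK, muR_eq_zero hIK]
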